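/- Let A, B be symmetric d×d matrices with B positive definite. Given an orthonormal P_j ∈ ℝ^{d×p}, define q_j = tr(P_jᵀ A P_j)/tr(P_jᵀ B P_j) and let P_{j+1} be an orthonormal eigenbasis for the p largest eigenvalues of H_j = A − q_j B. Then the SCF iteration is monotonic: q_{j+1} = tr(P_{j+1}ᵀ A P_{j+1})/tr(P_{j+1}ᵀ B P_{j+1}) ≥ q_j. -/

import Mathlib

/-!
Write `H_j = V D(μ) Vᵀ` and `Q = Vᵀ P_j`. Then `tr(P_jᵀ H_j P_j) = ∑ₖ μₖ wₖ` with weights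
`wₖ = (Q Qᵀ)ₖₖ`, which lie in `[0, 1]` because `Q Qᵀ` is an orthogonal projection, and sum
to `p`. Such a weighted sum is at most the sum of the `p` largest `μₖ`, which is
`tr(P_{j+1}ᵀ H_j P_{j+1})` (Ky Fan). Since `tr(P_jᵀ H_j P_j) = 0` by the choice of `q_j`, this gives
`tr(P_{j+1}ᵀ A P_{j+1}) - q_j tr(P_{j+1}ᵀ B P_{j+1}) ≥ 0`, and the trace of `B` is positive.
-/

open Matrix

theorem Finset.sum_mul_le_sum_of_weights_mem_Icc {ι : Type*} [Fintype ι] [DecidableEq ι]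
    {S : Finset ι} (hS : S.Nonempty) {μ w : ι → ℝ} (hμ : ∀ k ∈ S, ∀ l ∉ S, μ l ≤ μ k)
    (hw : ∀ k, w k ∈ Set.Icc 0 1) (hsum : ∑ k, w k = S.card) :
    ∑ k, μ k * w k ≤ ∑ k ∈ S, μ k := by
  -- `t` separates the values of `μ` on `S` from those off `S`, so `(μ k - t) (w k - 1_S k) ≤ 0`.
  set t := S.inf' hS μ
  have hterm : ∀ k, μ k * w k - (if k ∈ S then μ k else 0) ≤
      t * (w k - if k ∈ S then 1 else 0) := by
    intro k
    obtain ⟨hw0, hw1⟩ := hw k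
    split_ifs with hk
    · nlinarith [S.inf'_le μ hk]
    · nlinarith [S.le_inf' hS μ fun l hl => hμ l hl k hk]
  have hsum_le := Finset.sum_le_sum fun k (_ : k ∈ Finset.univ) => hterm k
  simp only [Finset.sum_sub_distrib, ← Finset.mul_sum, Finset.sum_ite_mem, Finset.univ_inter,
    hsum, Finset.sum_const, nsmul_eq_mul, mul_one, sub_self, mul_zero] at hsum_le
  linarith

namespace Matrix

variable {m n R : Type*} [Fintype n]

theorem PosDef.transpose_mul_mul_of_transpose_mul_eq_one [Fintype m] [DecidableEq m]
    {B : Matrix n n ℝ} (hB : B.PosDef) {P : Matrix n m ℝ} (hP : Pᵀ * P = 1) :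
    (Pᵀ * B * P).PosDef := by
  have hinj : Function.Injective P.mulVec := fun x y hxy => by
    simpa [mulVec_mulVec, hP] using congrArg (Pᵀ *ᵥ ·) hxy
  simpa [conjTranspose_eq_transpose_of_trivial] using hB.conjTranspose_mul_mul_same hinj

theorem diag_mem_Icc_of_mul_transpose_self_eq [CommRing R] [LinearOrder R] [IsStrictOrderedRing R]
    {M : Matrix n n R} (hM : M * Mᵀ = M) (k : n) : M k k ∈ Set.Icc 0 1 := by
  have hsq : M k k * M k k ≤ M k k :=
    calc M k k * M k k ≤ ∑ l, M k l * M k l :=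
          Finset.single_le_sum (fun l _ => mul_self_nonneg (M k l)) (Finset.mem_univ k)
      _ = (M * Mᵀ) k k := by simp only [mul_apply, transpose_apply]
      _ = M k k := by rw [hM]
  constructor <;> nlinarith [mul_self_nonneg (M k k)]

variable [CommRing R]

theorem mul_transpose_self_mul_transpose_eq [Fintype m] [DecidableEq m] {Q : Matrix n m R}
    (hQ : Qᵀ * Q = 1) : Q * Qᵀ * (Q * Qᵀ)ᵀ = Q * Qᵀ := by
  rw [transpose_mul, transpose_transpose, Matrix.mul_assoc, ← Matrix.mul_assoc Qᵀ, hQ,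
    Matrix.one_mul]

theorem trace_mul_transpose_self [Fintype m] [DecidableEq m] {Q : Matrix n m R}
    (hQ : Qᵀ * Q = 1) : (Q * Qᵀ).trace = Fintype.card m := by
  rw [trace_mul_comm, hQ, trace_one]

theorem trace_transpose_mul_diagonal_mul [Fintype m] [DecidableEq n] (Q : Matrix n m R)
    (μ : n → R) :
    (Qᵀ * diagonal μ * Q).trace = ∑ k, μ k * (Q * Qᵀ) k k := by
  rw [trace_mul_cycle, trace_mul_comm]
  simp only [trace, diag_apply, diagonal_mul]

theorem transpose_submatrix_mul_mul_submatrix (V : Matrix n n R) (M : Matrix n n R) (f : m → n) :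
    (V.submatrix id f)ᵀ * M * V.submatrix id f = (Vᵀ * M * V).submatrix f f := by
  ext i j
  simp [mul_apply, Finset.sum_mul]

theorem transpose_mul_conj_mul_eq_of_transpose_mul_eq_one [DecidableEq n] {V : Matrix n n R}
    (hV : Vᵀ * V = 1) (M : Matrix n n R) : Vᵀ * (V * M * Vᵀ) * V = M := by
  rw [show Vᵀ * (V * M * Vᵀ) * V = Vᵀ * V * M * (Vᵀ * V) by simp only [Matrix.mul_assoc],
    hV, Matrix.one_mul, Matrix.mul_one]

theorem trace_transpose_mul_sub_smul_mul [Fintype m] (P : Matrix n m R) (A B : Matrix n n R)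
    (q : R) :
    (Pᵀ * (A - q • B) * P).trace = (Pᵀ * A * P).trace - q * (Pᵀ * B * P).trace := by
  rw [Matrix.mul_sub, Matrix.sub_mul, Matrix.mul_smul, Matrix.smul_mul, trace_sub, trace_smul,
    smul_eq_mul]

theorem trace_transpose_mul_diagonal_mul_le_sum_castLE {d p : ℕ} (hp : p ≤ d) (hp0 : 0 < p)
    {μ : Fin d → ℝ} (hμ : Antitone μ) {Q : Matrix (Fin d) (Fin p) ℝ} (hQ : Qᵀ * Q = 1) :
    (Qᵀ * diagonal μ * Q).trace ≤ ∑ i : Fin p, μ (Fin.castLE hp i) := by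
  have : Nonempty (Fin p) := Fin.pos_iff_nonempty.mp hp0
  set S := Finset.univ.map (Fin.castLEEmb hp)
  have hμS : ∀ k ∈ S, ∀ l ∉ S, μ l ≤ μ k := by
    intro k hk l hl
    obtain ⟨i, -, rfl⟩ := Finset.mem_map.mp hk
    refine hμ (Fin.le_def.mpr ?_)
    by_contra! hlp
    exact hl (Finset.mem_map.mpr ⟨⟨l, hlp.trans (by simp)⟩, Finset.mem_univ _, rfl⟩)
  have hsum : ∑ k, (Q * Qᵀ) k k = S.card :=
    (trace_mul_transpose_self hQ).trans (by simp [S])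
  rw [trace_transpose_mul_diagonal_mul,
    show ∑ i, μ (Fin.castLE hp i) = ∑ k ∈ S, μ k by simp [S]]
  exact Finset.sum_mul_le_sum_of_weights_mem_Icc Finset.univ_nonempty.map hμS
    (diag_mem_Icc_of_mul_transpose_self_eq (mul_transpose_self_mul_transpose_eq hQ)) hsum

theorem trace_transpose_mul_conj_diagonal_mul_le_sum_castLE {d p : ℕ} (hp : p ≤ d)
    (hp0 : 0 < p) {μ : Fin d → ℝ} (hμ : Antitone μ) {V : Matrix (Fin d) (Fin d) ℝ}
    (hV : Vᵀ * V = 1) {P : Matrix (Fin d) (Fin p) ℝ} (hP : Pᵀ * P = 1) :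
    (Pᵀ * (V * diagonal μ * Vᵀ) * P).trace ≤ ∑ i : Fin p, μ (Fin.castLE hp i) := by
  have hVP : (Vᵀ * P)ᵀ * (Vᵀ * P) = 1 := by
    rw [transpose_mul, transpose_transpose, Matrix.mul_assoc, ← Matrix.mul_assoc V,
      mul_eq_one_comm.mp hV, Matrix.one_mul, hP]
  calc (Pᵀ * (V * diagonal μ * Vᵀ) * P).trace
        = ((Vᵀ * P)ᵀ * diagonal μ * (Vᵀ * P)).trace := by
        rw [transpose_mul, transpose_transpose]; simp only [Matrix.mul_assoc]
    _ ≤ ∑ i : Fin p, μ (Fin.castLE hp i) :=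
        trace_transpose_mul_diagonal_mul_le_sum_castLE hp hp0 hμ hVP

end Matrix

theorem scf_trace_ratio_monotonic_general
    (d p : ℕ) (hp : p ≤ d)
    (A B : Matrix (Fin d) (Fin d) ℝ)
    (hB : B.PosDef)
    (Pj : Matrix (Fin d) (Fin p) ℝ) (hPj : Pjᵀ * Pj = 1)
    (qj : ℝ) (hqj : qj = (Pjᵀ * A * Pj).trace / (Pjᵀ * B * Pj).trace)
    (Hj : Matrix (Fin d) (Fin d) ℝ) (hHj : Hj = A - qj • B)
    (V : Matrix (Fin d) (Fin d) ℝ) (μ : Fin d → ℝ)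
    (hV : Vᵀ * V = 1) (hμ : Antitone μ)
    (hdec : Hj = V * Matrix.diagonal μ * Vᵀ)
    (Pnext : Matrix (Fin d) (Fin p) ℝ)
    (hPnext : Pnext = Matrix.of fun i j => V i (Fin.castLE hp j)) :
    qj ≤ (Pnextᵀ * A * Pnext).trace / (Pnextᵀ * B * Pnext).trace := by
  rcases Nat.eq_zero_or_pos p with rfl | hp0
  · simp [hqj, trace]
  replace hPnext : Pnext = V.submatrix id (Fin.castLE hp) := hPnext
  have hPnextO : Pnextᵀ * Pnext = 1 := by
    rw [← Matrix.mul_one Pnextᵀ, hPnext, transpose_submatrix_mul_mul_submatrix, Matrix.mul_one,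
      hV, submatrix_one _ (Fin.castLE_injective hp)]
  have : Nonempty (Fin p) := Fin.pos_iff_nonempty.mp hp0
  have hBj := (hB.transpose_mul_mul_of_transpose_mul_eq_one hPj).trace_pos
  have hBnext := (hB.transpose_mul_mul_of_transpose_mul_eq_one hPnextO).trace_pos
  have hHj_zero : (Pjᵀ * Hj * Pj).trace = 0 := by
    rw [hHj, trace_transpose_mul_sub_smul_mul, hqj, div_mul_cancel₀ _ hBj.ne', sub_self]
  have hHj_le : (Pjᵀ * Hj * Pj).trace ≤ (Pnextᵀ * Hj * Pnext).trace :=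
    calc (Pjᵀ * Hj * Pj).trace ≤ ∑ i : Fin p, μ (Fin.castLE hp i) := by
          rw [hdec]; exact trace_transpose_mul_conj_diagonal_mul_le_sum_castLE hp hp0 hμ hV hPj
      _ = (Pnextᵀ * Hj * Pnext).trace := by
          rw [hdec, hPnext, transpose_submatrix_mul_mul_submatrix,
            transpose_mul_conj_mul_eq_of_transpose_mul_eq_one hV,
            submatrix_diagonal _ _ (Fin.castLE_injective hp), trace_diagonal]
          rfl
  rw [hHj_zero, hHj, trace_transpose_mul_sub_smul_mul] at hHj_le
  rw [le_div_iff₀ hBnext]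
  linarith

/-- Monotonicity of the SCF iteration for the trace ratio optimization: if
`P_{j+1}` is an orthonormal eigenbasis for the `p` largest eigenvalues of
`H_j = A − q_j B`, where `q_j = tr(P_jᵀAP_j)/tr(P_jᵀBP_j)`, then
`q_{j+1} ≥ q_j`. The eigenbasis is expressed via an eigendecomposition
`H_j = V D(μ) Vᵀ` with `V` orthogonal, `μ` decreasing, and `P_{j+1}` the first
`p` columns of `V`. -/
theorem scf_trace_ratio_monotonic
    (d p : ℕ) (hp : p ≤ d)
    (A B : Matrix (Fin d) (Fin d) ℝ)
    (hA : Aᵀ = A) (hB : B.PosDef)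
    (Pj : Matrix (Fin d) (Fin p) ℝ) (hPj : Pjᵀ * Pj = 1)
    (qj : ℝ) (hqj : qj = (Pjᵀ * A * Pj).trace / (Pjᵀ * B * Pj).trace)
    (Hj : Matrix (Fin d) (Fin d) ℝ) (hHj : Hj = A - qj • B)
    (V : Matrix (Fin d) (Fin d) ℝ) (μ : Fin d → ℝ)
    (hV : Vᵀ * V = 1) (hμ : Antitone μ)
    (hdec : Hj = V * Matrix.diagonal μ * Vᵀ)
    (Pnext : Matrix (Fin d) (Fin p) ℝ)
    (hPnext : Pnext = Matrix.of fun i j => V i (Fin.castLE hp j)) :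
    qj ≤ (Pnextᵀ * A * Pnext).trace / (Pnextᵀ * B * Pnext).trace :=
  scf_trace_ratio_monotonic_general d p hp A B hB Pj hPj qj hqj Hj hHj V μ hV hμ hdec Pnext hPnext
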